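/- arXiv:1604.01466 — 7 statements merged into one kernel-verified Lean document; each statement's English description precedes it below -/
import Mathlib

section
/- Let α and β be positive coprime integers, δ a positive integer, ℓ an integer with 0 ≤ ℓ < δ, and set η = χ(−ℓ/(βδ)). Let C ∈ ℂ and let z₁, z₂ be nonzero complex numbers. Then the two equations z₁ + z₁⁻¹ + z₂ + z₂⁻¹ = C and z₁^α·z₂^β = χ(ℓ/δ) hold if and only if there exists a nonzero complex number z such that z₁ = z^β, z₂ = η⁻¹·z^{−α}, and z^β + z^{−β} + η·z^α + η⁻¹·z^{−α} = C. Moreover, such a z is unique. -/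
/-- `χ t = exp(2πit)` -/
noncomputable def χ (t : ℂ) : ℂ := Complex.exp (2 * (Real.pi : ℂ) * Complex.I * t)

/-- equivalence of the tube dispersion system with the single-variable
form, together with uniqueness of the parameter `z`. -/
theorem stmt_0 (α β δ : ℤ) (hα : 0 < α) (hβ : 0 < β) (hcop : IsCoprime α β)
    (hδ : 0 < δ) (ℓ : ℤ) (hℓ0 : 0 ≤ ℓ) (hℓδ : ℓ < δ)
    (η : ℂ) (hη : η = χ (-(ℓ : ℂ) / ((β : ℂ) * (δ : ℂ))))
    (C : ℂ) (z₁ z₂ : ℂ) (hz₁ : z₁ ≠ 0) (hz₂ : z₂ ≠ 0) :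
    ((z₁ + z₁⁻¹ + z₂ + z₂⁻¹ = C ∧ z₁ ^ α * z₂ ^ β = χ ((ℓ : ℂ) / (δ : ℂ))) ↔
      (∃ z : ℂ, z ≠ 0 ∧ z₁ = z ^ β ∧ z₂ = η⁻¹ * z ^ (-α) ∧
        z ^ β + z ^ (-β) + η * z ^ α + η⁻¹ * z ^ (-α) = C)) ∧
    (∀ z w : ℂ, z ≠ 0 → w ≠ 0 →
      (z₁ = z ^ β ∧ z₂ = η⁻¹ * z ^ (-α) ∧
        z ^ β + z ^ (-β) + η * z ^ α + η⁻¹ * z ^ (-α) = C) →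
      (z₁ = w ^ β ∧ z₂ = η⁻¹ * w ^ (-α) ∧
        w ^ β + w ^ (-β) + η * w ^ α + η⁻¹ * w ^ (-α) = C) →
      z = w) := by
  have hηne : η ≠ 0 := by rw [hη]; exact Complex.exp_ne_zero _
  have hβc : (β : ℂ) ≠ 0 := Int.cast_ne_zero.mpr hβ.ne'
  have hδc : (δ : ℂ) ≠ 0 := Int.cast_ne_zero.mpr hδ.ne'
  have hηβ : η ^ β * χ ((ℓ : ℂ) / (δ : ℂ)) = 1 := by
    rw [hη]
    unfold χ
    rw [← Complex.exp_int_mul, ← Complex.exp_add, ← Complex.exp_zero]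
    congr 1
    field_simp
    ring
  obtain ⟨s, t, hst⟩ := hcop
  -- the sum identity for any parametrization
  have hsum : ∀ z : ℂ, z ≠ 0 → z₁ = z ^ β → z₂ = η⁻¹ * z ^ (-α) →
      z₁ + z₁⁻¹ + z₂ + z₂⁻¹ = z ^ β + z ^ (-β) + η * z ^ α + η⁻¹ * z ^ (-α) := by
    intro z hz h1 h2
    subst h1; subst h2
    simp only [mul_inv, inv_inv, ← zpow_neg, neg_neg]
    ring
  constructor
  · constructor
    · rintro ⟨hC, hprod⟩
      have hmulne : η * z₂ ≠ 0 := mul_ne_zero hηne hz₂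
      have hz₁α : z₁ ^ α ≠ 0 := zpow_ne_zero _ hz₁
      have hz2β : z₂ ^ β = (z₁ ^ α)⁻¹ * χ ((ℓ : ℂ) / (δ : ℂ)) := by
        rw [← hprod, inv_mul_cancel_left₀ hz₁α]
      have hrel : (η * z₂) ^ β = z₁ ^ (-α) := by
        rw [mul_zpow, hz2β, zpow_neg]
        rw [show η ^ β * ((z₁ ^ α)⁻¹ * χ ((ℓ : ℂ) / (δ : ℂ)))
            = (z₁ ^ α)⁻¹ * (η ^ β * χ ((ℓ : ℂ) / (δ : ℂ))) by ring, hηβ, mul_one]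
      set z : ℂ := z₁ ^ t * (η * z₂) ^ (-s) with hzdef
      have hzne : z ≠ 0 := mul_ne_zero (zpow_ne_zero _ hz₁) (zpow_ne_zero _ hmulne)
      have hzβ : z ^ β = z₁ := by
        have h1 : z ^ β = z₁ ^ (t * β) * ((η * z₂) ^ β) ^ (-s) := by
          rw [hzdef, mul_zpow, ← zpow_mul, ← zpow_mul, mul_comm (-s) β,
            zpow_mul (η * z₂) β (-s)]
        rw [h1, hrel, ← zpow_mul, ← zpow_add₀ hz₁]
        rw [show t * β + -α * -s = 1 by linarith, zpow_one]
      have hzα : z ^ (-α) = η * z₂ := by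
        have h1 : z ^ (-α) = (z₁ ^ (-α)) ^ t * (η * z₂) ^ (-s * -α) := by
          rw [hzdef, mul_zpow, ← zpow_mul, ← zpow_mul, mul_comm t (-α),
            zpow_mul z₁ (-α) t]
        rw [h1, ← hrel, ← zpow_mul, ← zpow_add₀ hmulne]
        rw [show β * t + -s * -α = 1 by linarith, zpow_one]
      have hz2 : z₂ = η⁻¹ * z ^ (-α) := by
        rw [hzα, inv_mul_cancel_left₀ hηne]
      exact ⟨z, hzne, hzβ.symm, hz2, by rw [← hsum z hzne hzβ.symm hz2]; exact hC⟩
    · rintro ⟨z, hzne, h1, h2, hC⟩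
      refine ⟨by rw [hsum z hzne h1 h2]; exact hC, ?_⟩
      have hzz : z ^ (β * α) * z ^ (-α * β) = 1 := by
        rw [← zpow_add₀ hzne, show β * α + -α * β = 0 by ring, zpow_zero]
      have key : z₁ ^ α * z₂ ^ β = η ^ (-β) := by
        rw [h1, h2, mul_zpow, ← zpow_mul, ← zpow_mul,
          show (η⁻¹) ^ β = η ^ (-β) by rw [inv_zpow, ← zpow_neg]]
        linear_combination η ^ (-β) * hzz
      have hχ : χ ((ℓ : ℂ) / (δ : ℂ)) = (η ^ β)⁻¹ := eq_inv_of_mul_eq_one_left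
        (by linear_combination hηβ)
      rw [key, hχ, zpow_neg]
  · intro z w hzne hwne ⟨ha1, ha2, _⟩ ⟨hb1, hb2, _⟩
    have hβeq : z ^ β = w ^ β := by rw [← ha1, hb1]
    have hαeq : z ^ α = w ^ α := by
      have h := ha2.symm.trans hb2
      have h' : z ^ (-α) = w ^ (-α) := mul_left_cancel₀ (inv_ne_zero hηne) h
      have := congrArg (·⁻¹) h'
      simpa [zpow_neg] using this
    calc z = z ^ (s * α + t * β) := by rw [hst, zpow_one]
      _ = (z ^ α) ^ s * (z ^ β) ^ t := by
          rw [zpow_add₀ hzne, mul_comm s α, mul_comm t β, zpow_mul, zpow_mul]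
      _ = (w ^ α) ^ s * (w ^ β) ^ t := by rw [hαeq, hβeq]
      _ = w := by
          rw [← zpow_mul, ← zpow_mul, ← zpow_add₀ hwne,
            show α * s + β * t = 1 by linarith, zpow_one]
end

section
/- Let α and β be positive coprime integers, δ a positive integer, ℓ an integer with 0 ≤ ℓ < δ, and set η = χ(−ℓ/(δβ)) and η' = χ(−(δ−ℓ)/(δβ)). Let j be an integer with j·α ≡ 1 (mod β). For a nonzero complex number z set z' = z⁻¹·χ(j/β). Then z'^β = (z^β)⁻¹, η'⁻¹·z'^{−α} = (η⁻¹·z^{−α})⁻¹, and z'^β + z'^{−β} + η'·z'^α + η'⁻¹·z'^{−α} = z^β + z^{−β} + η·z^α + η⁻¹·z^{−α}. -/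
lemma chi_ne_zero (t : ℂ) : χ t ≠ 0 := Complex.exp_ne_zero _

lemma chi_add (s t : ℂ) : χ (s + t) = χ s * χ t := by
  simp only [χ, mul_add, Complex.exp_add]

lemma chi_zpow (t : ℂ) (n : ℤ) : χ t ^ n = χ (n * t) := by
  rw [χ, χ, ← Complex.exp_int_mul]
  ring_nf

lemma chi_intCast (n : ℤ) : χ n = 1 := by
  rw [χ, mul_comm]
  exact Complex.exp_int_mul_two_pi_mul_I n

lemma chi_div_zpow_self (j : ℤ) {β : ℤ} (hβ : β ≠ 0) : χ (j / β) ^ β = 1 := by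
  rw [chi_zpow, mul_div_cancel₀ _ (Int.cast_ne_zero.2 hβ), chi_intCast]

lemma chi_div_zpow_neg_of_mul_modEq {j α β : ℤ} (hβ : β ≠ 0) (hj : j * α ≡ 1 [ZMOD β]) :
    χ (j / β) ^ (-α) = χ (-1 / β) := by
  obtain ⟨k, hk⟩ := Int.ModEq.dvd hj
  have hkC : (1 : ℂ) - j * α = β * k := by exact_mod_cast congrArg (fun x : ℤ => (x : ℂ)) hk
  have hβC : (β : ℂ) ≠ 0 := Int.cast_ne_zero.2 hβ
  have hexp : ((-α : ℤ) : ℂ) * (j / β) = -1 / β + k := by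
    push_cast
    field_simp
    linear_combination hkC
  rw [chi_zpow, hexp, chi_add, chi_intCast, mul_one]

lemma chi_mul_chi_sub (ℓ δ β : ℂ) (hδ : δ ≠ 0) :
    χ (-ℓ / (δ * β)) * χ (-(δ - ℓ) / (δ * β)) = χ (-1 / β) := by
  rw [← chi_add, ← add_div, ← mul_div_mul_left (-1) β hδ]
  ring_nf

section Floquet

variable {K : Type*} [Field K]

lemma inv_mul_zpow_neg_eq_inv {z c η η' : K} {α : ℤ} (hc : c ^ (-α) = η * η') (hη' : η' ≠ 0) :
    η'⁻¹ * (z⁻¹ * c) ^ (-α) = (η⁻¹ * z ^ (-α))⁻¹ := by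
  rw [mul_zpow, hc, mul_inv, inv_inv, inv_zpow]
  field_simp

lemma dispersion_eq_floquet_pair (w η : K) (α β : ℤ) :
    w ^ β + w ^ (-β) + η * w ^ α + η⁻¹ * w ^ (-α)
      = w ^ β + (w ^ β)⁻¹ + ((η⁻¹ * w ^ (-α))⁻¹ + η⁻¹ * w ^ (-α)) := by
  rw [zpow_neg, zpow_neg, mul_inv, inv_inv, inv_inv]
  ring

end Floquet

theorem stmt_3_general (α β δ : ℤ) (hβ : 0 < β)
    (hδ : 0 < δ) (ℓ : ℤ)
    (η η' : ℂ)
    (hη : η = χ (-(ℓ : ℂ) / ((δ : ℂ) * (β : ℂ))))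
    (hη' : η' = χ (-(((δ : ℂ) - (ℓ : ℂ))) / ((δ : ℂ) * (β : ℂ))))
    (j : ℤ) (hj : j * α ≡ 1 [ZMOD β])
    (z : ℂ)
    (z' : ℂ) (hz' : z' = z⁻¹ * χ ((j : ℂ) / (β : ℂ))) :
    z' ^ β = (z ^ β)⁻¹ ∧
    η'⁻¹ * z' ^ (-α) = (η⁻¹ * z ^ (-α))⁻¹ ∧
    z' ^ β + z' ^ (-β) + η' * z' ^ α + η'⁻¹ * z' ^ (-α)
      = z ^ β + z ^ (-β) + η * z ^ α + η⁻¹ * z ^ (-α) := by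
  have hc : χ (j / β) ^ (-α) = η * η' := by
    rw [chi_div_zpow_neg_of_mul_modEq hβ.ne' hj, hη, hη',
      chi_mul_chi_sub _ _ _ (Int.cast_ne_zero.2 hδ.ne')]
  have hA : z' ^ β = (z ^ β)⁻¹ := by
    rw [hz', mul_zpow, chi_div_zpow_self j hβ.ne', mul_one, inv_zpow]
  have hB : η'⁻¹ * z' ^ (-α) = (η⁻¹ * z ^ (-α))⁻¹ := by
    rw [hz']
    exact inv_mul_zpow_neg_eq_inv hc (hη' ▸ chi_ne_zero _)
  refine ⟨hA, hB, ?_⟩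
  rw [dispersion_eq_floquet_pair z', dispersion_eq_floquet_pair z, hA, hB, inv_inv, inv_inv]
  ring

/-- the replacement `z ↦ z⁻¹χ(j/β)` with `jα ≡ 1 (mod β)`,
`η ↦ χ(−(δ−ℓ)/(δβ))`, inverts the Floquet pair `(z^β, η⁻¹z^{−α})` and preserves
the dispersion expression. -/
theorem stmt_3 (α β δ : ℤ) (hα : 0 < α) (hβ : 0 < β) (hcop : IsCoprime α β)
    (hδ : 0 < δ) (ℓ : ℤ) (hℓ0 : 0 ≤ ℓ) (hℓδ : ℓ < δ)
    (η η' : ℂ)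
    (hη : η = χ (-(ℓ : ℂ) / ((δ : ℂ) * (β : ℂ))))
    (hη' : η' = χ (-(((δ : ℂ) - (ℓ : ℂ))) / ((δ : ℂ) * (β : ℂ))))
    (j : ℤ) (hj : j * α ≡ 1 [ZMOD β])
    (z : ℂ) (hz : z ≠ 0)
    (z' : ℂ) (hz' : z' = z⁻¹ * χ ((j : ℂ) / (β : ℂ))) :
    z' ^ β = (z ^ β)⁻¹ ∧
    η'⁻¹ * z' ^ (-α) = (η⁻¹ * z ^ (-α))⁻¹ ∧
    z' ^ β + z' ^ (-β) + η' * z' ^ α + η'⁻¹ * z' ^ (-α)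
      = z ^ β + z ^ (-β) + η * z ^ α + η⁻¹ * z ^ (-α) :=
  stmt_3_general α β δ hβ hδ ℓ η η' hη hη' j hj z z' hz'
end

section
/- Let α and β be integers with 0 < α < β, let η be a complex number with |η| = 1, and let z be a nonzero complex number with |z| ≠ 1. Then β·(z^β − z^{−β}) ≠ −α·(η·z^α − η⁻¹·z^{−α}). Consequently, for any constant C ∈ ℂ, the derivative of the function w ↦ w^β + w^{−β} + η·w^α + η⁻¹·w^{−α} − C does not vanish at z, so z is at most a simple zero of this function. -/
/-!
Write `r = ‖z‖ = exp t` with `t ≠ 0`. The map `w ↦ w - w⁻¹` sends the circle `‖w‖ = exp s` onto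
the ellipse with semi-axes `2 sinh s` and `2 cosh s`. Hence `β (z^β - z^(-β))` lies on the ellipse
with semi-axes `2β sinh (β t)`, `2β cosh (β t)`, and `-α (η z^α - η⁻¹ z^(-α)) = α (w - w⁻¹)` for
`w = -η z^α` lies on the one with semi-axes `2α sinh (α t)`, `2α cosh (α t)`. Since
`s ↦ s sinh (s t)` and `s ↦ s cosh (s t)` increase strictly in `|s|`, the second ellipse lies
strictly inside the first, so the two points differ. The derivative of the function at `z` is
`z⁻¹` times the difference of the two sides.
-/

open Real

lemma sq_re_div_add_sq_im_div_of_norm_eq_exp {w : ℂ} {t c : ℝ} (ht : t ≠ 0) (hc : c ≠ 0)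
    (hw : ‖w‖ = exp t) :
    ((c * (w - w⁻¹)).re / (2 * c * sinh t)) ^ 2
      + ((c * (w - w⁻¹)).im / (2 * c * cosh t)) ^ 2 = 1 := by
  have hR : exp t ≠ 0 := (exp_pos t).ne'
  have hnormSq : Complex.normSq w = exp t ^ 2 := by rw [← Complex.sq_norm, hw]
  have hsinh : exp t ^ 2 - 1 = 2 * exp t * sinh t := by
    rw [sinh_eq, exp_neg]; field_simp
  have hsq : exp t ^ 2 - 1 ≠ 0 := by rw [hsinh]; simpa using ht
  have hre : (c * (w - w⁻¹)).re / (2 * c * sinh t) = w.re / exp t := by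
    simp only [Complex.re_ofReal_mul, Complex.sub_re, Complex.inv_re, hnormSq]
    rw [sinh_eq, exp_neg]
    field_simp
  have him : (c * (w - w⁻¹)).im / (2 * c * cosh t) = w.im / exp t := by
    simp only [Complex.im_ofReal_mul, Complex.sub_im, Complex.inv_im, hnormSq, cosh_eq, exp_neg]
    field_simp
    ring
  rw [hre, him, div_pow, div_pow, ← add_div, div_eq_one_iff_eq (pow_ne_zero 2 hR), ← hnormSq,
    Complex.normSq_apply]
  ring

lemma abs_mul_lt_abs_mul_of_lt {a b t : ℝ} (ha : 0 < a) (hab : a < b) (ht : t ≠ 0) :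
    |a * t| < |b * t| := by
  rw [abs_mul, abs_mul, abs_of_pos ha, abs_of_pos (ha.trans hab)]
  exact mul_lt_mul_of_pos_right hab (abs_pos.2 ht)

lemma mul_sinh_mul_sq_lt {a b t : ℝ} (ha : 0 < a) (hab : a < b) (ht : t ≠ 0) :
    (2 * a * sinh (a * t)) ^ 2 < (2 * b * sinh (b * t)) ^ 2 := by
  have hb : 0 < 2 * b := by linarith
  rw [← sq_abs, ← sq_abs (2 * b * _)]
  gcongr
  calc |2 * a * sinh (a * t)| = 2 * a * sinh |a * t| := by
        rw [abs_mul, abs_sinh, abs_of_pos (by positivity : 0 < 2 * a)]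
    _ < 2 * b * sinh |b * t| := by
        gcongr
        exact sinh_lt_sinh.2 (abs_mul_lt_abs_mul_of_lt ha hab ht)
    _ = |2 * b * sinh (b * t)| := by rw [abs_mul _ (sinh _), abs_sinh, abs_of_pos hb]

lemma mul_cosh_mul_sq_lt {a b t : ℝ} (ha : 0 < a) (hab : a < b) (ht : t ≠ 0) :
    (2 * a * cosh (a * t)) ^ 2 < (2 * b * cosh (b * t)) ^ 2 := by
  gcongr
  exact cosh_lt_cosh.2 (abs_mul_lt_abs_mul_of_lt ha hab ht)

lemma sq_div_add_sq_div_lt {x y a₁ b₁ a₂ b₂ : ℝ} (hxy : x ≠ 0 ∨ y ≠ 0) (ha₁ : a₁ ≠ 0)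
    (hb₁ : b₁ ≠ 0) (ha : a₁ ^ 2 < a₂ ^ 2) (hb : b₁ ^ 2 < b₂ ^ 2) :
    (x / a₂) ^ 2 + (y / b₂) ^ 2 < (x / a₁) ^ 2 + (y / b₁) ^ 2 := by
  simp only [div_pow]
  have hpa := pow_two_pos_of_ne_zero ha₁
  have hpb := pow_two_pos_of_ne_zero hb₁
  rcases hxy with hx | hy
  · have := div_lt_div_of_pos_left (pow_two_pos_of_ne_zero hx) hpa ha
    have := div_le_div_of_nonneg_left (sq_nonneg y) hpb hb.le
    linarith
  · have := div_le_div_of_nonneg_left (sq_nonneg x) hpa ha.le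
    have := div_lt_div_of_pos_left (pow_two_pos_of_ne_zero hy) hpb hb
    linarith

lemma mul_sub_inv_ne_of_norm_eq_exp {a b t : ℝ} (ha : 0 < a) (hab : a < b) (ht : t ≠ 0)
    {X Y : ℂ} (hX : ‖X‖ = exp (b * t)) (hY : ‖Y‖ = exp (a * t)) :
    (b : ℂ) * (X - X⁻¹) ≠ a * (Y - Y⁻¹) := by
  intro h
  have hb : 0 < b := ha.trans hab
  have hatne : a * t ≠ 0 := mul_ne_zero ha.ne' ht
  have hXe := sq_re_div_add_sq_im_div_of_norm_eq_exp (mul_ne_zero hb.ne' ht) hb.ne' hX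
  have hYe := sq_re_div_add_sq_im_div_of_norm_eq_exp hatne ha.ne' hY
  rw [← h] at hYe
  have hv : (b * (X - X⁻¹) : ℂ).re ≠ 0 ∨ (b * (X - X⁻¹) : ℂ).im ≠ 0 := by
    by_contra! hv
    simp [hv.1, hv.2] at hXe
  have hlt := sq_div_add_sq_div_lt hv
    (mul_ne_zero (by positivity) (sinh_ne_zero.2 hatne)) (by positivity)
    (mul_sinh_mul_sq_lt ha hab ht) (mul_cosh_mul_sq_lt ha hab ht)
  rw [hXe, hYe] at hlt
  exact lt_irrefl 1 hlt

lemma hasDerivAt_zpow_add_zpow_neg_add {m n : ℤ} {z : ℂ} (hz : z ≠ 0) (η C : ℂ) :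
    HasDerivAt (fun w : ℂ => w ^ n + w ^ (-n) + η * w ^ m + η⁻¹ * w ^ (-m) - C)
      (z⁻¹ * (n * (z ^ n - z ^ (-n)) + m * (η * z ^ m - η⁻¹ * z ^ (-m)))) z := by
  have hd : HasDerivAt (fun w : ℂ => w ^ n + w ^ (-n) + η * w ^ m + η⁻¹ * w ^ (-m) - C)
      (n * z ^ (n - 1) + ((-n : ℤ) : ℂ) * z ^ (-n - 1) + η * (m * z ^ (m - 1))
        + η⁻¹ * (((-m : ℤ) : ℂ) * z ^ (-m - 1))) z :=
    ((((hasDerivAt_zpow n z (.inl hz)).add (hasDerivAt_zpow (-n) z (.inl hz))).add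
      ((hasDerivAt_zpow m z (.inl hz)).const_mul η)).add
      ((hasDerivAt_zpow (-m) z (.inl hz)).const_mul η⁻¹)).sub_const C
  refine hd.congr_deriv ?_
  simp only [zpow_sub_one₀ hz, Int.cast_neg]
  ring

/-- for `0 < α < β`, `|η| = 1` and `|z| ≠ 1`, the multiple-root
condition fails, so the derivative of the dispersion function does not vanish
at `z` and `z` is at most a simple zero. -/
theorem stmt_5 (α β : ℤ) (hα : 0 < α) (hαβ : α < β)
    (η : ℂ) (hη : ‖η‖ = 1)
    (z : ℂ) (hz : z ≠ 0) (hz1 : ‖z‖ ≠ 1) :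
    (β : ℂ) * (z ^ β - z ^ (-β)) ≠ -(α : ℂ) * (η * z ^ α - η⁻¹ * z ^ (-α)) ∧
    (∀ C : ℂ,
      deriv (fun w : ℂ => w ^ β + w ^ (-β) + η * w ^ α + η⁻¹ * w ^ (-α) - C) z ≠ 0) := by
  have hr : 0 < ‖z‖ := norm_pos_iff.2 hz
  have hnorm (n : ℤ) : ‖z‖ ^ n = exp (n * log ‖z‖) := by
    rw [← rpow_intCast, rpow_def_of_pos hr, mul_comm]
  have hne : (β : ℂ) * (z ^ β - z ^ (-β)) ≠ -(α : ℂ) * (η * z ^ α - η⁻¹ * z ^ (-α)) := by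
    have h := mul_sub_inv_ne_of_norm_eq_exp (X := z ^ β) (Y := -(η * z ^ α))
      (a := α) (b := β) (by exact_mod_cast hα) (by exact_mod_cast hαβ)
      (log_ne_zero_of_pos_of_ne_one hr hz1)
      (by rw [norm_zpow, hnorm]) (by rw [norm_neg, norm_mul, hη, one_mul, norm_zpow, hnorm])
    convert h using 1
    · rw [zpow_neg]; push_cast; rfl
    · rw [inv_neg, mul_inv, zpow_neg]; push_cast; ring
  refine ⟨hne, fun C => ?_⟩
  rw [(hasDerivAt_zpow_add_zpow_neg_add hz η C).deriv]
  refine mul_ne_zero (inv_ne_zero hz) fun h => hne ?_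
  linear_combination h
end

section
/- For every m ≥ 1, the polynomial P_m has exactly m distinct real roots. -/
/-!
`P` satisfies the recurrence of Mathlib's rescaled Chebyshev polynomials `S`, so `P m = S m`, and
`S m (2 x) = U m x`. Hence the zeros of `P m` are twice those of `U m`, which are the `m` distinct
numbers `cos (k π / (m + 1))`, `k = 1, …, m`, since `U m (cos θ) sin θ = sin ((m + 1) θ)`.
-/

noncomputable def P : ℕ → Polynomial ℝ
  | 0 => 1
  | 1 => Polynomial.X
  | (m + 2) => Polynomial.X * P (m + 1) - P m

open Polynomial Polynomial.Chebyshev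

theorem P_eq_S (m : ℕ) : P m = S ℝ m := by
  induction m using Nat.twoStepInduction with
  | zero => simp [P]
  | one => simp [P]
  | more n ih₀ ih₁ =>
    rw [P, ih₀, ih₁]
    exact_mod_cast (S_add_two ℝ n).symm

theorem ncard_setOf_eval_U_real_eq_zero (n : ℕ) : {x : ℝ | (U ℝ n).eval x = 0}.ncard = n := by
  have hU : U ℝ n ≠ 0 := U_ne_zero ℝ n (by omega)
  have hroots : {x : ℝ | (U ℝ n).eval x = 0} = ((U ℝ n).roots.toFinset : Set ℝ) := by
    ext x
    simp [hU]
  rw [hroots, Set.ncard_coe_finset, roots_U_real, Finset.val_toFinset,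
    Finset.card_image_of_injOn ((Finset.range n).nodup_map_iff_injOn.mp (roots_U_real_nodup n)),
    Finset.card_range]

theorem ncard_setOf_eval_S_real_eq_zero (n : ℕ) : {x : ℝ | (S ℝ n).eval x = 0}.ncard = n := by
  have hzeros : {x : ℝ | (S ℝ n).eval x = 0} = (2 * ·) '' {y : ℝ | (U ℝ n).eval y = 0} := by
    ext x
    simp only [Set.mem_ofPred_eq, Set.mem_image, ← S_comp_two_mul_X, eval_comp, eval_mul,
      eval_X, eval_ofNat]
    exact ⟨fun hx => ⟨x / 2, by rwa [mul_div_cancel₀ x two_ne_zero], by ring⟩,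
      fun ⟨y, hy, hxy⟩ => hxy ▸ hy⟩
  rw [hzeros, Set.ncard_image_of_injective _ (mul_right_injective₀ two_ne_zero),
    ncard_setOf_eval_U_real_eq_zero]

theorem stmt_11_general (m : ℕ) :
    {x : ℝ | (P m).eval x = 0}.ncard = m := by
  rw [P_eq_S]
  exact ncard_setOf_eval_S_real_eq_zero m

/-- for every `m ≥ 1`, the polynomial `P_m` has exactly `m` distinct
real roots. -/
theorem stmt_11 (m : ℕ) (hm : 1 ≤ m) :
    {x : ℝ | (P m).eval x = 0}.ncard = m :=
  stmt_11_general m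
end

section
/- Let n ≥ 1 and let J be a 2n×2n complex Hermitian matrix that is tridiagonal with all diagonal entries equal to 0 and all superdiagonal (hence subdiagonal) entries of modulus 1. Then J has exactly n positive eigenvalues and exactly n negative eigenvalues, counted with multiplicity; in particular J is invertible and the Hermitian form u ↦ u*·J·u on ℂ^{2n} has signature (n,n). -/
/-!
With `D = diagonal ((-1) ^ i)`, conjugation by `D` flips the sign of every entry `J i j` with
`i + j` odd, and these are the only nonzero entries, so `D * J * D = -J`: the characteristic
polynomials of `J` and `-J` agree and the spectrum of `J` is symmetric about `0`.
`J` is also invertible: if `J *ᵥ v = 0`, row `2k` forces `v (2k+1) = 0` once `v (2k-1) = 0`, and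
row `2k+1` forces `v (2k) = 0` once `v (2k+2) = 0`, so `v` vanishes on odd indices by induction
upwards and on even indices by induction downwards from the last row. Hence the `2n` eigenvalues
are nonzero and split evenly between the two signs.
-/

open Polynomial

namespace Matrix

variable {ι : Type*} [Fintype ι]

lemma eq_zero_of_mulVec_apply_eq_zero {R : Type*} [Semiring R] [NoZeroDivisors R]
    {A : Matrix ι ι R} {v : ι → R} {i k : ι} (hAv : (A *ᵥ v) i = 0) (hik : A i k ≠ 0)
    (hv : ∀ j ≠ k, A i j ≠ 0 → v j = 0) : v k = 0 := by
  have hrow : (A *ᵥ v) i = A i k * v k := by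
    refine Finset.sum_eq_single k (fun j _ hjk => ?_) (by simp)
    by_cases hij : A i j = 0
    · simp [hij]
    · simp [hv j hjk hij]
  exact (mul_eq_zero.mp (hrow ▸ hAv)).resolve_left hik

variable {𝕜 : Type*} [RCLike 𝕜] [DecidableEq ι]

lemma IsHermitian.charpoly_neg {A : Matrix ι ι 𝕜} (hA : A.IsHermitian) :
    (-A).charpoly = ∏ i, (X - C (-hA.eigenvalues i : 𝕜)) := by
  conv_lhs => rw [hA.spectral_theorem, ← map_neg, Unitary.conjStarAlgAut_apply,
    charpoly_mul_comm, ← mul_assoc]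
  simp [charpoly_diagonal]

lemma IsHermitian.map_neg_eigenvalues_of_charpoly_neg {A : Matrix ι ι 𝕜} (hA : A.IsHermitian)
    (h : (-A).charpoly = A.charpoly) :
    (Finset.univ.val.map hA.eigenvalues).map Neg.neg = Finset.univ.val.map hA.eigenvalues := by
  have hroots := congrArg roots h
  rw [hA.charpoly_neg, hA.charpoly_eq,
    roots_prod _ _ (Finset.prod_ne_zero_iff.mpr fun _ _ => X_sub_C_ne_zero _),
    roots_prod _ _ (Finset.prod_ne_zero_iff.mpr fun _ _ => X_sub_C_ne_zero _)] at hroots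
  apply Multiset.map_injective (RCLike.ofReal_injective (K := 𝕜))
  simpa [Multiset.map_map, Function.comp_def] using hroots

lemma IsHermitian.adjacent_of_apply_ne_zero {α : Type*} [AddMonoid α] [StarAddMonoid α]
    {m : ℕ} {A : Matrix (Fin m) (Fin m) α} (hA : A.IsHermitian) (hdiag : ∀ i, A i i = 0)
    (htri : ∀ i j : Fin m, (i : ℕ) + 1 < j → A i j = 0) (i j : Fin m) (hij : A i j ≠ 0) :
    (j : ℕ) = i + 1 ∨ (i : ℕ) = j + 1 := by
  by_contra! h
  rcases lt_trichotomy ((i : ℕ) + 1) j with hlt | heq | hgt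
  · exact hij (htri i j hlt)
  · exact h.1 heq.symm
  · obtain rfl | hlt : j = i ∨ (j : ℕ) + 1 < i := by omega
    · exact hij (hdiag j)
    · exact hij (by rw [← hA.apply, htri j i hlt, star_zero])

variable {R : Type*} [CommRing R] {m : ℕ}

lemma charpoly_neg_eq_of_even_add {A : Matrix (Fin m) (Fin m) R}
    (hA : ∀ i j : Fin m, Even ((i : ℕ) + j) → A i j = 0) : (-A).charpoly = A.charpoly := by
  set D : Matrix (Fin m) (Fin m) R := diagonal fun i => (-1) ^ (i : ℕ)
  have hDD : D * D = 1 := by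
    simp [D, diagonal_mul_diagonal, ← pow_add, ← two_mul, pow_mul]
  have hDAD : D * A * D = -A := by
    ext i j
    rcases Nat.even_or_odd ((i : ℕ) + j) with h | h
    · simp [D, hA i j h]
    · simp only [D, neg_apply, diagonal_mul, mul_diagonal]
      rw [mul_right_comm, ← pow_add, h.neg_one_pow, neg_one_mul]
  rw [← hDAD, mul_assoc, charpoly_mul_comm, mul_assoc, hDD, mul_one]

section Tridiagonal

variable {A : Matrix (Fin m) (Fin m) R}

lemma eq_zero_of_mulVec_eq_zero_of_odd [NoZeroDivisors R] {v : Fin m → R}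
    (hA : ∀ i j, A i j ≠ 0 → (j : ℕ) = i + 1 ∨ (i : ℕ) = j + 1)
    (hsup : ∀ i j : Fin m, (j : ℕ) = i + 1 → A i j ≠ 0) (hv : A *ᵥ v = 0) (i : Fin m)
    (hi : Odd (i : ℕ)) : v i = 0 := by
  induction i using WellFoundedLT.induction with
  | _ i ih =>
  obtain ⟨a, ha⟩ := hi
  let r : Fin m := ⟨2 * a, by omega⟩
  refine eq_zero_of_mulVec_apply_eq_zero (congrFun hv r) (hsup r i (by simp [r, ha]))
    fun j hji hrj => ?_
  rcases hA r j hrj with h | h <;> simp only [r] at h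
  · exact absurd (Fin.ext (by omega)) hji
  · exact ih j (by rw [Fin.lt_def]; omega) ⟨a - 1, by omega⟩

lemma eq_zero_of_mulVec_eq_zero_of_even [NoZeroDivisors R] {v : Fin m → R} (hm : Even m)
    (hA : ∀ i j, A i j ≠ 0 → (j : ℕ) = i + 1 ∨ (i : ℕ) = j + 1)
    (hsub : ∀ i j : Fin m, (i : ℕ) = j + 1 → A i j ≠ 0) (hv : A *ᵥ v = 0) (i : Fin m)
    (hi : Even (i : ℕ)) : v i = 0 := by
  induction i using WellFoundedGT.induction with
  | _ i ih =>
  obtain ⟨a, ha⟩ := hi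
  obtain ⟨b, hb⟩ := hm
  -- `i` is even and `m` is even, so row `i + 1` exists
  let r : Fin m := ⟨i + 1, by omega⟩
  refine eq_zero_of_mulVec_apply_eq_zero (congrFun hv r) (hsub r i rfl) fun j hji hrj => ?_
  rcases hA r j hrj with h | h <;> simp only [r] at h
  · exact ih j (by rw [Fin.lt_def]; omega) ⟨a + 1, by omega⟩
  · exact absurd (Fin.ext (by omega)) hji

lemma det_ne_zero_of_tridiagonal [IsDomain R] (hm : Even m)
    (hA : ∀ i j, A i j ≠ 0 → (j : ℕ) = i + 1 ∨ (i : ℕ) = j + 1)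
    (hsup : ∀ i j : Fin m, (j : ℕ) = i + 1 → A i j ≠ 0)
    (hsub : ∀ i j : Fin m, (i : ℕ) = j + 1 → A i j ≠ 0) : A.det ≠ 0 := by
  intro hdet
  obtain ⟨v, hv0, hv⟩ := exists_mulVec_eq_zero_iff.mpr hdet
  exact hv0 <| funext fun i => (Nat.even_or_odd i).elim
    (eq_zero_of_mulVec_eq_zero_of_even hm hA hsub hv i)
    (eq_zero_of_mulVec_eq_zero_of_odd hA hsup hv i)

end Tridiagonal

end Matrix

namespace Multiset

variable {α : Type*} [LinearOrder α] {S : Multiset α}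

lemma card_filter_pos_eq_card_filter_neg [AddCommGroup α] [IsOrderedAddMonoid α]
    (hS : S.map Neg.neg = S) :
    (S.filter (0 < ·)).card = (S.filter (· < 0)).card := by
  conv_lhs => rw [← hS]
  rw [filter_map, card_map]
  exact congrArg card (filter_congr fun x _ => neg_pos)

lemma card_filter_pos_add_card_filter_neg [Zero α] (h0 : (0 : α) ∉ S) :
    (S.filter (0 < ·)).card + (S.filter (· < 0)).card = card S := by
  conv_rhs => rw [← filter_add_not (0 < ·) S]
  rw [card_add]
  congr 2
  exact filter_congr fun x hx => by
    rw [not_lt, le_iff_lt_or_eq, or_iff_left (ne_of_mem_of_not_mem hx h0)]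

end Multiset

lemma Set.ncard_setOf_apply_eq_card_filter_map {ι α : Type*} [Fintype ι] (f : ι → α)
    (p : α → Prop) [DecidablePred p] :
    {i | p (f i)}.ncard = ((Finset.univ.val.map f).filter p).card := by
  rw [Multiset.filter_map, Multiset.card_map, ← Finset.filter_val, Finset.card_val]
  simp [Set.ncard_eq_toFinset_card']

theorem stmt_13_general (n : ℕ)
    (J : Matrix (Fin (2 * n)) (Fin (2 * n)) ℂ) (hJ : J.IsHermitian)
    (hdiag : ∀ i, J i i = 0)
    (htri : ∀ i j : Fin (2 * n), (i : ℕ) + 1 < (j : ℕ) → J i j = 0)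
    (hsup : ∀ i j : Fin (2 * n), (j : ℕ) = (i : ℕ) + 1 → ‖J i j‖ = 1) :
    {i : Fin (2 * n) | 0 < hJ.eigenvalues i}.ncard = n ∧
    {i : Fin (2 * n) | hJ.eigenvalues i < 0}.ncard = n ∧
    J.det ≠ 0 := by
  have hband := hJ.adjacent_of_apply_ne_zero hdiag htri
  have hsup_ne : ∀ i j : Fin (2 * n), (j : ℕ) = i + 1 → J i j ≠ 0 := fun i j h =>
    norm_ne_zero_iff.mp (by rw [hsup i j h]; exact one_ne_zero)
  have hsub_ne : ∀ i j : Fin (2 * n), (i : ℕ) = j + 1 → J i j ≠ 0 := fun i j h => by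
    rw [← hJ.apply]; exact star_ne_zero.mpr (hsup_ne j i h)
  have hdet := Matrix.det_ne_zero_of_tridiagonal (even_two_mul n) hband hsup_ne hsub_ne
  rw [Set.ncard_setOf_apply_eq_card_filter_map _ (0 < ·),
    Set.ncard_setOf_apply_eq_card_filter_map _ (· < 0)]
  set S := Finset.univ.val.map hJ.eigenvalues
  have h0 : (0 : ℝ) ∉ S := fun h => by
    obtain ⟨i, -, hi⟩ := Multiset.mem_map.mp h
    exact hdet <|
      hJ.det_eq_prod_eigenvalues ▸ Finset.prod_eq_zero (Finset.mem_univ i) (by simp [hi])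
  have hS : S.map Neg.neg = S := hJ.map_neg_eigenvalues_of_charpoly_neg <|
    Matrix.charpoly_neg_eq_of_even_add fun i j heven => by
      by_contra hij
      obtain ⟨k, hk⟩ := heven
      rcases hband i j hij with h | h <;> omega
  have hpos := Multiset.card_filter_pos_eq_card_filter_neg hS
  have hsum := Multiset.card_filter_pos_add_card_filter_neg h0
  rw [show Multiset.card S = 2 * n by simp [S]] at hsum
  exact ⟨by omega, by omega, hdet⟩

/-- a `2n × 2n` Hermitian tridiagonal matrix with zero diagonal and
unit-modulus superdiagonal entries has exactly `n` positive and `n` negative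
eigenvalues (counted with multiplicity); in particular it is invertible, i.e. the
associated Hermitian form has signature `(n, n)`. -/
theorem stmt_13 (n : ℕ) (hn : 1 ≤ n)
    (J : Matrix (Fin (2 * n)) (Fin (2 * n)) ℂ) (hJ : J.IsHermitian)
    (hdiag : ∀ i, J i i = 0)
    (htri : ∀ i j : Fin (2 * n), (i : ℕ) + 1 < (j : ℕ) → J i j = 0)
    (hsup : ∀ i j : Fin (2 * n), (j : ℕ) = (i : ℕ) + 1 → ‖J i j‖ = 1) :
    {i : Fin (2 * n) | 0 < hJ.eigenvalues i}.ncard = n ∧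
    {i : Fin (2 * n) | hJ.eigenvalues i < 0}.ncard = n ∧
    J.det ≠ 0 :=
  stmt_13_general n J hJ hdiag htri hsup
end

section
/- Let α and β be integers with 0 < α < β, with β even and α odd. Then the image of the interval (−1,0) under f is exactly (0,∞); in particular, for every real C > 0 there exists z ∈ (−1,0) with f(z) = C. Moreover, for any z ∈ (−1,0) one has z^β ∈ (0,1) and z^{−α} < −1. -/
open Set

/-- rewriting f at a negative point in terms of the positive variable -/
private lemma fval_neg {α β : ℤ} (hβe : Even β) (hαo : Odd α) (t : ℝ) :
    (-t) ^ β + (-t) ^ (-β) + (-t) ^ α + (-t) ^ (-α)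
      = t ^ β + t ^ (-β) - (t ^ α + t ^ (-α)) := by
  rw [hβe.neg_zpow, hβe.neg.neg_zpow, hαo.neg_zpow, hαo.neg.neg_zpow]
  ring

/-- x + x⁻¹ is strictly antitone on (0,1] -/
private lemma aux_anti {x y : ℝ} (hx0 : 0 < x) (hxy : x < y) (hy1 : y ≤ 1) :
    y + y⁻¹ < x + x⁻¹ := by
  have hy0 : 0 < y := hx0.trans hxy
  have h1 : x * x⁻¹ = 1 := mul_inv_cancel₀ hx0.ne'
  have h2 : y * y⁻¹ = 1 := mul_inv_cancel₀ hy0.ne'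
  have h3 : x⁻¹ - y⁻¹ = (y - x) * (x⁻¹ * y⁻¹) := by field_simp
  have h4 : (1:ℝ) < x⁻¹ * y⁻¹ := by
    rw [← mul_inv]
    exact (one_lt_inv₀ (mul_pos hx0 hy0)).2 (by nlinarith)
  nlinarith [mul_lt_mul_of_pos_left h4 (sub_pos.2 hxy)]

private lemma key_pos {α β : ℤ} (hα : 0 < α) (hαβ : α < β) {t : ℝ}
    (ht0 : 0 < t) (ht1 : t < 1) : t ^ α + t ^ (-α) < t ^ β + t ^ (-β) := by
  have hx0 : 0 < t ^ β := zpow_pos ht0 β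
  have hxy : t ^ β < t ^ α := zpow_right_strictAnti₀ ht0 ht1 hαβ
  have hy1 : t ^ α ≤ 1 := (zpow_lt_one₀ ht0 ht1 hα).le
  have := aux_anti hx0 hxy hy1
  rwa [← zpow_neg, ← zpow_neg] at this

/-- for `0 < α < β` with `β` even and `α` odd, the image of `(−1,0)`
under `f(z) = z^β + z^{−β} + z^α + z^{−α}` is exactly `(0,∞)`; in particular every
`C > 0` is attained on `(−1,0)`, and for `z ∈ (−1,0)` one has `z^β ∈ (0,1)` and
`z^{−α} < −1`. -/
theorem stmt_15 (α β : ℤ) (hα : 0 < α) (hαβ : α < β) (hβe : Even β) (hαo : Odd α) :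
    ((fun z : ℝ => z ^ β + z ^ (-β) + z ^ α + z ^ (-α)) '' Set.Ioo (-1) 0
        = Set.Ioi 0) ∧
    (∀ C : ℝ, 0 < C → ∃ z ∈ Set.Ioo (-1 : ℝ) 0,
      z ^ β + z ^ (-β) + z ^ α + z ^ (-α) = C) ∧
    (∀ z ∈ Set.Ioo (-1 : ℝ) 0, z ^ β ∈ Set.Ioo (0 : ℝ) 1 ∧ z ^ (-α) < -1) := by
  set f : ℝ → ℝ := fun z => z ^ β + z ^ (-β) + z ^ α + z ^ (-α) with hfdef
  have hβ : 0 < β := hα.trans hαβ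
  -- positivity of f on Ioo (-1) 0
  have hpos : ∀ z ∈ Ioo (-1 : ℝ) 0, 0 < f z := by
    rintro z ⟨hz1, hz0⟩
    have ht0 : 0 < -z := by linarith
    have ht1 : -z < 1 := by linarith
    have := key_pos hα hαβ ht0 ht1
    have hval := fval_neg (α := α) (β := β) hβe hαo (-z)
    rw [neg_neg] at hval
    simp only [hfdef, hval]
    linarith
  -- f(-1) = 0
  have hfm1 : f (-1) = 0 := by
    simp only [hfdef, hβe.neg_one_zpow, hβe.neg.neg_one_zpow, hαo.neg_one_zpow,
      hαo.neg.neg_one_zpow]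
    ring
  -- continuity
  have hcont : ∀ b : ℝ, b < 0 → ContinuousOn f (Icc (-1) b) := by
    intro b hb
    have hne : ∀ x ∈ Icc (-1 : ℝ) b, x ≠ 0 ∨ True := fun x hx => Or.inl
      (ne_of_lt (lt_of_le_of_lt hx.2 hb))
    have h1 : ∀ (n : ℤ), ContinuousOn (fun x : ℝ => x ^ n) (Icc (-1) b) := by
      intro n
      exact continuousOn_id.zpow₀ n fun x hx => Or.inl (ne_of_lt (lt_of_le_of_lt hx.2 hb))
    exact (((h1 β).add (h1 (-β))).add (h1 α)).add (h1 (-α))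
  -- existence of point with large value
  have hbig : ∀ C : ℝ, 0 < C → ∃ b ∈ Ioo (-1 : ℝ) 0, C < f b := by
    intro C hC
    set t : ℝ := min (1/2) (1/(C+2)) with htdef
    have ht0 : 0 < t := lt_min (by norm_num) (by positivity)
    have ht1 : t < 1 := lt_of_le_of_lt (min_le_left _ _) (by norm_num)
    have htinv2 : (2 : ℝ) ≤ t⁻¹ := by
      rw [le_inv_comm₀ (by norm_num) ht0]
      exact le_trans (min_le_left _ _) (by norm_num)
    have htinvC : C + 2 ≤ t⁻¹ := by
      rw [le_inv_comm₀ (by positivity) ht0]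
      rw [inv_eq_one_div]
      exact min_le_right _ _
    have hA2 : (2 : ℝ) ≤ t ^ (-α) := by
      calc (2 : ℝ) ≤ t⁻¹ := htinv2
        _ = t ^ (-1 : ℤ) := (zpow_neg_one t).symm
        _ ≤ t ^ (-α) := by
            rw [zpow_le_zpow_iff_right_of_lt_one₀ ht0 ht1]
            omega
    have hBA : t ^ (-α) * (C + 2) ≤ t ^ (-β) := by
      have hsplit : t ^ (-β) = t ^ (-α) * t ^ (-(β - α)) := by
        rw [← zpow_add₀ ht0.ne']
        ring_nf
      rw [hsplit]
      have h2 : C + 2 ≤ t ^ (-(β - α)) := by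
        calc C + 2 ≤ t⁻¹ := htinvC
          _ = t ^ (-1 : ℤ) := (zpow_neg_one t).symm
          _ ≤ t ^ (-(β - α)) := by
              rw [zpow_le_zpow_iff_right_of_lt_one₀ ht0 ht1]
              omega
      have hApos : 0 < t ^ (-α) := zpow_pos ht0 _
      nlinarith
    have htα1 : t ^ α < 1 := zpow_lt_one₀ ht0 ht1 hα
    have htβ0 : 0 < t ^ β := zpow_pos ht0 β
    refine ⟨-t, ⟨by linarith, by linarith⟩, ?_⟩
    have hval := fval_neg (α := α) (β := β) hβe hαo t
    simp only [hfdef]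
    rw [hval]
    have hApos : 0 < t ^ (-α) := zpow_pos ht0 _
    nlinarith
  -- surjectivity
  have hsurj : ∀ C : ℝ, 0 < C → ∃ z ∈ Ioo (-1 : ℝ) 0, f z = C := by
    intro C hC
    obtain ⟨b, ⟨hb1, hb0⟩, hbC⟩ := hbig C hC
    have hab : (-1 : ℝ) ≤ b := hb1.le
    have hIVT := intermediate_value_Ioo hab (hcont b hb0)
    have hCmem : C ∈ Ioo (f (-1)) (f b) := by
      rw [hfm1]; exact ⟨hC, hbC⟩
    obtain ⟨z, hz, hfz⟩ := hIVT hCmem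
    exact ⟨z, ⟨hz.1, hz.2.trans hb0⟩, hfz⟩
  refine ⟨?_, hsurj, ?_⟩
  · apply Set.eq_of_subset_of_subset
    · rintro y ⟨z, hz, rfl⟩
      exact hpos z hz
    · intro C hC
      obtain ⟨z, hz, hfz⟩ := hsurj C hC
      exact ⟨z, hz, hfz⟩
  · rintro z ⟨hz1, hz0⟩
    have ht0 : 0 < -z := by linarith
    have ht1 : -z < 1 := by linarith
    have h1 : z ^ β = (-z) ^ β := (hβe.neg_zpow z).symm
    have h2 : z ^ (-α) = -((-z) ^ (-α)) := by
      have h := hαo.neg.neg_zpow (-z)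
      rw [neg_neg] at h
      exact h
    constructor
    · rw [h1]
      exact ⟨zpow_pos ht0 β, zpow_lt_one₀ ht0 ht1 hβ⟩
    · rw [h2, neg_lt_neg_iff]
      exact one_lt_zpow_of_neg₀ ht0 ht1 (by omega)
end

section
/- Let q : [0,1] → ℝ be continuous and λ ∈ ℝ. Let c and s be the real-valued solutions with c(0)=1, c'(0)=0 and s(0)=0, s'(0)=1, and assume s(1) ≠ 0. Then for any complex-valued solutions u and v and every x ∈ [0,1], conj(u(x))·v'(x) − conj(u'(x))·v(x) = ( conj(u(0))·v(1) − conj(u(1))·v(0) ) / s(1). -/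
/-!
The Wronskian `W(f, g) = f g' - f' g` of two solutions of `w'' = r w` is constant. Applied to
`c`, `s` and an arbitrary solution `w` (with `W(c, s) = 1`) this gives `w = w(0) c + w'(0) s`;
since `q - λ` is real, `conj ∘ u` is again a solution, so at `x = 1`
`conj(u(0)) v(1) - conj(u(1)) v(0) = s(1) · W(conj ∘ u, v)(0)`, and `W(conj ∘ u, v)` is constant.
-/

open Set ComplexConjugate

theorem derivWithin_ofReal_comp {c : ℝ → ℝ} {s : Set ℝ} {x : ℝ}
    (hc : DifferentiableWithinAt ℝ c s x) (hs : UniqueDiffWithinAt ℝ s x) :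
    derivWithin (fun y => (c y : ℂ)) s x = derivWithin c s x :=
  hc.hasDerivWithinAt.ofReal_comp.derivWithin hs

theorem derivWithin_conj_comp {w : ℝ → ℂ} {s : Set ℝ} {x : ℝ} :
    derivWithin (fun y => conj (w y)) s x = conj (derivWithin w s x) :=
  derivWithin.star

/-- `w` solves `w'' = r w` on `[a, b]`, with one-sided derivatives at the endpoints. -/
def IsSolutionOn (r : ℝ → ℂ) (a b : ℝ) (w : ℝ → ℂ) : Prop :=
  ContDiffOn ℝ 2 w (Icc a b) ∧
    ∀ x ∈ Icc a b, derivWithin (derivWithin w (Icc a b)) (Icc a b) x = r x * w x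

noncomputable def wronskianWithin (s : Set ℝ) (f g : ℝ → ℂ) (x : ℝ) : ℂ :=
  f x * derivWithin g s x - derivWithin f s x * g x

namespace IsSolutionOn

variable {r : ℝ → ℂ} {a b : ℝ} {f g w : ℝ → ℂ}

theorem hasDerivWithinAt (hw : IsSolutionOn r a b w) {x : ℝ} (hx : x ∈ Icc a b) :
    HasDerivWithinAt w (derivWithin w (Icc a b) x) (Icc a b) x :=
  (hw.1.differentiableOn (by norm_num) x hx).hasDerivWithinAt

theorem hasDerivWithinAt_derivWithin (hw : IsSolutionOn r a b w) (hab : a < b) {x : ℝ}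
    (hx : x ∈ Icc a b) :
    HasDerivWithinAt (derivWithin w (Icc a b)) (r x * w x) (Icc a b) x := by
  have hw' := (hw.1.derivWithin (m := 1) (uniqueDiffOn_Icc hab) (by norm_num)).differentiableOn
    (by norm_num) x hx
  exact hw.2 x hx ▸ hw'.hasDerivWithinAt

theorem wronskianWithin_eq (hf : IsSolutionOn r a b f) (hg : IsSolutionOn r a b g) (hab : a < b) :
    ∀ x ∈ Icc a b, wronskianWithin (Icc a b) f g x = wronskianWithin (Icc a b) f g a := by
  have hW : ∀ x ∈ Icc a b, HasDerivWithinAt (wronskianWithin (Icc a b) f g) 0 (Icc a b) x := by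
    intro x hx
    exact (((hf.hasDerivWithinAt hx).mul (hg.hasDerivWithinAt_derivWithin hab hx)).sub
      ((hf.hasDerivWithinAt_derivWithin hab hx).mul (hg.hasDerivWithinAt hx))).congr_deriv
      (by ring)
  refine constant_of_derivWithin_zero (fun x hx => (hW x hx).differentiableWithinAt) ?_
  exact fun x hx => (hW x (Ico_subset_Icc_self hx)).derivWithin
    (uniqueDiffOn_Icc hab x (Ico_subset_Icc_self hx))

theorem eq_add_of_fundamental {c s : ℝ → ℂ} (hc : IsSolutionOn r a b c)
    (hs : IsSolutionOn r a b s) (hw : IsSolutionOn r a b w) (hab : a < b)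
    (hca : c a = 1) (hca' : derivWithin c (Icc a b) a = 0)
    (hsa : s a = 0) (hsa' : derivWithin s (Icc a b) a = 1) {x : ℝ} (hx : x ∈ Icc a b) :
    w x = c x * w a + s x * derivWithin w (Icc a b) a := by
  have hcw := hc.wronskianWithin_eq hw hab x hx
  have hsw := hs.wronskianWithin_eq hw hab x hx
  have hcs := hc.wronskianWithin_eq hs hab x hx
  simp only [wronskianWithin, hca, hca', hsa, hsa'] at hcw hsw hcs
  linear_combination s x * hcw - c x * hsw - w x * hcs

theorem ofReal {p : ℝ → ℝ} {c : ℝ → ℝ} (hab : a < b) (hc : ContDiffOn ℝ 2 c (Icc a b))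
    (hceq : ∀ x ∈ Icc a b, derivWithin (derivWithin c (Icc a b)) (Icc a b) x = p x * c x) :
    IsSolutionOn (fun x => (p x : ℂ)) a b (fun x => (c x : ℂ)) := by
  have hUD := uniqueDiffOn_Icc hab
  have hderiv : ∀ x ∈ Icc a b,
      derivWithin (fun y => (c y : ℂ)) (Icc a b) x = derivWithin c (Icc a b) x := fun x hx =>
    derivWithin_ofReal_comp (hc.differentiableOn (by norm_num) x hx) (hUD x hx)
  refine ⟨Complex.ofRealCLM.contDiff.comp_contDiffOn hc, fun x hx => ?_⟩
  have hc' := (hc.derivWithin (m := 1) hUD (by norm_num)).differentiableOn (by norm_num) x hx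
  rw [derivWithin_congr hderiv (hderiv x hx), derivWithin_ofReal_comp hc' (hUD x hx), hceq x hx,
    Complex.ofReal_mul]

theorem conj_comp {p : ℝ → ℝ} (hu : IsSolutionOn (fun x => (p x : ℂ)) a b w) :
    IsSolutionOn (fun x => (p x : ℂ)) a b (fun x => conj (w x)) := by
  have hderiv : derivWithin (fun y => conj (w y)) (Icc a b) =
      fun x => conj (derivWithin w (Icc a b) x) := funext fun _ => derivWithin_conj_comp
  refine ⟨Complex.conjCLE.toContinuousLinearMap.contDiff.comp_contDiffOn hu.1, fun x hx => ?_⟩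
  rw [hderiv, derivWithin_conj_comp, hu.2 x hx, map_mul, Complex.conj_ofReal]

end IsSolutionOn

theorem stmt_18_general (q : ℝ → ℝ) (lam : ℝ)
    (c s : ℝ → ℝ)
    (hc : ContDiffOn ℝ 2 c (Set.Icc 0 1))
    (hs : ContDiffOn ℝ 2 s (Set.Icc 0 1))
    (hceq : ∀ x ∈ Set.Icc (0 : ℝ) 1,
      derivWithin (derivWithin c (Set.Icc 0 1)) (Set.Icc 0 1) x = (q x - lam) * c x)
    (hseq : ∀ x ∈ Set.Icc (0 : ℝ) 1,
      derivWithin (derivWithin s (Set.Icc 0 1)) (Set.Icc 0 1) x = (q x - lam) * s x)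
    (hc0 : c 0 = 1) (hc0' : derivWithin c (Set.Icc 0 1) 0 = 0)
    (hs0 : s 0 = 0) (hs0' : derivWithin s (Set.Icc 0 1) 0 = 1)
    (hs1 : s 1 ≠ 0)
    (u v : ℝ → ℂ)
    (hu : ContDiffOn ℝ 2 u (Set.Icc 0 1))
    (hv : ContDiffOn ℝ 2 v (Set.Icc 0 1))
    (hueq : ∀ x ∈ Set.Icc (0 : ℝ) 1,
      derivWithin (derivWithin u (Set.Icc 0 1)) (Set.Icc 0 1) x
        = ((q x : ℂ) - (lam : ℂ)) * u x)
    (hveq : ∀ x ∈ Set.Icc (0 : ℝ) 1,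
      derivWithin (derivWithin v (Set.Icc 0 1)) (Set.Icc 0 1) x
        = ((q x : ℂ) - (lam : ℂ)) * v x) :
    ∀ x ∈ Set.Icc (0 : ℝ) 1,
      (starRingEnd ℂ) (u x) * derivWithin v (Set.Icc 0 1) x
          - (starRingEnd ℂ) (derivWithin u (Set.Icc 0 1) x) * v x
        = ((starRingEnd ℂ) (u 0) * v 1 - (starRingEnd ℂ) (u 1) * v 0) / (s 1 : ℂ) := by
  intro x hx
  have h01 : (0 : ℝ) < 1 := one_pos
  have h0 : (0 : ℝ) ∈ Icc 0 1 := left_mem_Icc.2 zero_le_one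
  have hc0'' := derivWithin_ofReal_comp ((hc.differentiableOn (by norm_num)) 0 h0)
    (uniqueDiffOn_Icc h01 0 h0)
  have hs0'' := derivWithin_ofReal_comp ((hs.differentiableOn (by norm_num)) 0 h0)
    (uniqueDiffOn_Icc h01 0 h0)
  have hcsol := IsSolutionOn.ofReal (p := fun x => q x - lam) h01 hc hceq
  have hssol := IsSolutionOn.ofReal (p := fun x => q x - lam) h01 hs hseq
  have hrep : ∀ w, IsSolutionOn (fun x => ((q x - lam : ℝ) : ℂ)) 0 1 w →
      w 1 = c 1 * w 0 + s 1 * derivWithin w (Icc 0 1) 0 := fun w hw =>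
    hcsol.eq_add_of_fundamental hssol hw h01 (by simp [hc0]) (by simp [hc0'', hc0'])
      (by simp [hs0]) (by simp [hs0'', hs0']) (right_mem_Icc.2 zero_le_one)
  have husol : IsSolutionOn (fun x => ((q x - lam : ℝ) : ℂ)) 0 1 u :=
    ⟨hu, fun x hx => by push_cast; exact hueq x hx⟩
  have hvsol : IsSolutionOn (fun x => ((q x - lam : ℝ) : ℂ)) 0 1 v :=
    ⟨hv, fun x hx => by push_cast; exact hveq x hx⟩
  have hu1 := hrep _ husol.conj_comp
  have hW := husol.conj_comp.wronskianWithin_eq hvsol h01 x hx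
  simp only [wronskianWithin, derivWithin_conj_comp] at hW hu1
  have hs1' : (s 1 : ℂ) ≠ 0 := by exact_mod_cast hs1
  rw [hW, eq_div_iff hs1', hu1, hrep v hvsol]
  ring

/-- with `c`, `s` the standard real solutions of `w'' = (q − λ)w` on
`[0,1]` (`c(0)=1, c'(0)=0`, `s(0)=0, s'(0)=1`) and `s(1) ≠ 0`, for any complex
solutions `u`, `v` the Wronskian-type quantity equals
`(conj(u(0))·v(1) − conj(u(1))·v(0)) / s(1)` at every point of `[0,1]`. -/
theorem stmt_18 (q : ℝ → ℝ) (hq : ContinuousOn q (Set.Icc 0 1)) (lam : ℝ)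
    (c s : ℝ → ℝ)
    (hc : ContDiffOn ℝ 2 c (Set.Icc 0 1))
    (hs : ContDiffOn ℝ 2 s (Set.Icc 0 1))
    (hceq : ∀ x ∈ Set.Icc (0 : ℝ) 1,
      derivWithin (derivWithin c (Set.Icc 0 1)) (Set.Icc 0 1) x = (q x - lam) * c x)
    (hseq : ∀ x ∈ Set.Icc (0 : ℝ) 1,
      derivWithin (derivWithin s (Set.Icc 0 1)) (Set.Icc 0 1) x = (q x - lam) * s x)
    (hc0 : c 0 = 1) (hc0' : derivWithin c (Set.Icc 0 1) 0 = 0)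
    (hs0 : s 0 = 0) (hs0' : derivWithin s (Set.Icc 0 1) 0 = 1)
    (hs1 : s 1 ≠ 0)
    (u v : ℝ → ℂ)
    (hu : ContDiffOn ℝ 2 u (Set.Icc 0 1))
    (hv : ContDiffOn ℝ 2 v (Set.Icc 0 1))
    (hueq : ∀ x ∈ Set.Icc (0 : ℝ) 1,
      derivWithin (derivWithin u (Set.Icc 0 1)) (Set.Icc 0 1) x
        = ((q x : ℂ) - (lam : ℂ)) * u x)
    (hveq : ∀ x ∈ Set.Icc (0 : ℝ) 1,
      derivWithin (derivWithin v (Set.Icc 0 1)) (Set.Icc 0 1) x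
        = ((q x : ℂ) - (lam : ℂ)) * v x) :
    ∀ x ∈ Set.Icc (0 : ℝ) 1,
      (starRingEnd ℂ) (u x) * derivWithin v (Set.Icc 0 1) x
          - (starRingEnd ℂ) (derivWithin u (Set.Icc 0 1) x) * v x
        = ((starRingEnd ℂ) (u 0) * v 1 - (starRingEnd ℂ) (u 1) * v 0) / (s 1 : ℂ) :=
  stmt_18_general q lam c s hc hs hceq hseq hc0 hc0' hs0 hs0' hs1 u v hu hv hueq hveq
end
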